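/- Let X: U → ℝ³\{0} be a regular parametrized surface with Euclidean Gaussian curvature K, mean curvature H and unit normal N. The Weingarten relation 2K̃_E − K̃ = 0 holds in the Radial Model (ℝ³\{0}, (1/|x|²)g₀) if and only if ⟨X,X⟩·K + 2⟨X,N⟩·H = 0, i.e., X is an EDSGHW-surface in Euclidean ℝ³. -/

import Mathlib

/- Theorem 4.2: a regular surface X : U → ℝ³\{0} satisfies the Weingarten
   relation 2K̃_E − K̃ = 0 in the Radial Model iff ⟨X,X⟩K + 2⟨X,N⟩H = 0 on U,
   i.e. iff X is an EDSGHW-surface in Euclidean ℝ³.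
   Here t = ⟨X,X⟩, c = ⟨X,N⟩, Euclidean principal curvatures −λᵢ,
   H = −(λ₁+λ₂)/2, K = λ₁λ₂, Radial-Model principal curvatures
   λ̃ᵢ = √t λᵢ − c/√t, K̃_E = λ̃₁λ̃₂, and K̃ given by Proposition 4.1 with h = √. -/

noncomputable section

open scoped RealInnerProductSpace

abbrev E3 := EuclideanSpace ℝ (Fin 3)

/-- EDSGHW-surfaces: ⟨X,X⟩K + 2⟨X,N⟩H = 0 on U. -/
def IsEDSGHW (U : Set (ℝ × ℝ)) (X N : ℝ × ℝ → E3) (H K : ℝ × ℝ → ℝ) : Prop :=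
  ∀ p ∈ U, ⟪X p, X p⟫ * K p + 2 * ⟪X p, N p⟫ * H p = 0

/- With t = ⟨X,X⟩ and c = ⟨X,N⟩, both Radial-Model curvatures are tK + 2cH plus a correction:
K̃_E = tK + 2cH + c²/t, and, since h = √ has 4(h h'' − h'²) = −2/t and 4h h' = 2,
K̃ = tK + 2cH + 2c²/t. The corrections cancel in 2K̃_E − K̃, which is therefore tK + 2cH. -/

lemma deriv_sqrt_of_pos {t : ℝ} (ht : 0 < t) : deriv Real.sqrt t = 1 / (2 * √t) :=
  (Real.hasDerivAt_sqrt ht.ne').deriv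

lemma deriv_deriv_sqrt_of_pos {t : ℝ} (ht : 0 < t) :
    deriv (deriv Real.sqrt) t = -1 / (4 * t * √t) := by
  have hnear : deriv Real.sqrt =ᶠ[nhds t] fun x => (2 * √x)⁻¹ := by
    filter_upwards [eventually_gt_nhds ht] with x hx
    rw [deriv_sqrt_of_pos hx, one_div]
  have hinv : HasDerivAt (fun x => (2 * √x)⁻¹) (-(2 * (1 / (2 * √t))) / (2 * √t) ^ 2) t :=
    ((Real.hasDerivAt_sqrt ht.ne').const_mul 2).inv (by positivity)
  rw [hnear.deriv_eq, hinv.deriv]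
  field_simp
  rw [Real.sq_sqrt ht.le]
  ring

lemma radial_extrinsic_curvature_eq {t : ℝ} (ht : 0 < t) (c l₁ l₂ : ℝ) :
    (√t * l₁ - c / √t) * (√t * l₂ - c / √t)
      = t * (l₁ * l₂) + 2 * c * (-(l₁ + l₂) / 2) + c ^ 2 / t := by
  field_simp
  rw [Real.sq_sqrt ht.le]
  ring

lemma radial_curvature_eq {t : ℝ} (ht : 0 < t) (c H K : ℝ) :
    √t ^ 2 * K + 4 * (√t * deriv (deriv Real.sqrt) t - deriv Real.sqrt t ^ 2) * (t - c ^ 2)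
      + 4 * √t * deriv Real.sqrt t * (1 + H * c) = t * K + 2 * c * H + 2 * c ^ 2 / t := by
  have hsq : √t ^ 2 = t := Real.sq_sqrt ht.le
  rw [deriv_sqrt_of_pos ht, deriv_deriv_sqrt_of_pos ht, hsq]
  field_simp
  rw [hsq]
  ring

theorem stmt19_general (U : Set (ℝ × ℝ)) (X N : ℝ × ℝ → E3)
    (lam1 lam2 H K KE Ktilde : ℝ × ℝ → ℝ)
    (hX0 : ∀ p ∈ U, X p ≠ 0)
    (hH : ∀ p ∈ U, H p = -(lam1 p + lam2 p) / 2)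
    (hK : ∀ p ∈ U, K p = lam1 p * lam2 p)
    (hKE : ∀ p ∈ U, KE p =
      (Real.sqrt ⟪X p, X p⟫ * lam1 p - ⟪X p, N p⟫ / Real.sqrt ⟪X p, X p⟫) *
      (Real.sqrt ⟪X p, X p⟫ * lam2 p - ⟪X p, N p⟫ / Real.sqrt ⟪X p, X p⟫))
    (hKt : ∀ p ∈ U, Ktilde p = (Real.sqrt ⟪X p, X p⟫) ^ 2 * K p
      + 4 * (Real.sqrt ⟪X p, X p⟫ * deriv (deriv Real.sqrt) ⟪X p, X p⟫
          - (deriv Real.sqrt ⟪X p, X p⟫) ^ 2) * (⟪X p, X p⟫ - ⟪X p, N p⟫ ^ 2)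
      + 4 * Real.sqrt ⟪X p, X p⟫ * deriv Real.sqrt ⟪X p, X p⟫
          * (1 + H p * ⟪X p, N p⟫)) :
    (∀ p ∈ U, 2 * KE p - Ktilde p = 0) ↔ IsEDSGHW U X N H K := by
  have hdefect : ∀ p ∈ U, 2 * KE p - Ktilde p = ⟪X p, X p⟫ * K p + 2 * ⟪X p, N p⟫ * H p := by
    intro p hp
    have ht : 0 < ⟪X p, X p⟫ := real_inner_self_pos.2 (hX0 p hp)
    rw [hKE p hp, hKt p hp, radial_extrinsic_curvature_eq ht, radial_curvature_eq ht,
      ← hH p hp, ← hK p hp]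
    ring
  exact forall₂_congr fun p hp => by rw [hdefect p hp]

theorem stmt19 (U : Set (ℝ × ℝ)) (X N : ℝ × ℝ → E3)
    (lam1 lam2 H K KE Ktilde : ℝ × ℝ → ℝ)
    (hX0 : ∀ p ∈ U, X p ≠ 0) (hNorm : ∀ p ∈ U, ‖N p‖ = 1)
    (hH : ∀ p ∈ U, H p = -(lam1 p + lam2 p) / 2)
    (hK : ∀ p ∈ U, K p = lam1 p * lam2 p)
    (hKE : ∀ p ∈ U, KE p =
      (Real.sqrt ⟪X p, X p⟫ * lam1 p - ⟪X p, N p⟫ / Real.sqrt ⟪X p, X p⟫) *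
      (Real.sqrt ⟪X p, X p⟫ * lam2 p - ⟪X p, N p⟫ / Real.sqrt ⟪X p, X p⟫))
    (hKt : ∀ p ∈ U, Ktilde p = (Real.sqrt ⟪X p, X p⟫) ^ 2 * K p
      + 4 * (Real.sqrt ⟪X p, X p⟫ * deriv (deriv Real.sqrt) ⟪X p, X p⟫
          - (deriv Real.sqrt ⟪X p, X p⟫) ^ 2) * (⟪X p, X p⟫ - ⟪X p, N p⟫ ^ 2)
      + 4 * Real.sqrt ⟪X p, X p⟫ * deriv Real.sqrt ⟪X p, X p⟫
          * (1 + H p * ⟪X p, N p⟫)) :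
    (∀ p ∈ U, 2 * KE p - Ktilde p = 0) ↔ IsEDSGHW U X N H K :=
  stmt19_general U X N lam1 lam2 H K KE Ktilde hX0 hH hK hKE hKt
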